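/- arXiv:2203.17127 — 3 statements merged into one kernel-verified Lean document; each statement's English description precedes it below -/
import Mathlib

section
/- Let Δ₁, ..., Δ_s be a dissection of a d-dimensional polytope P ⊂ ℝⁿ into d-simplices (interior-disjoint simplices whose union is P), and let q ∈ P be a point in general position with respect to the dissection (q lies on no facet-defining hyperplane of any Δᵢ). Then P is the disjoint union of the half-open simplices H_q(Δ₁), ..., H_q(Δ_s), where H_q(Δ) is Δ with all facets visible from q removed. -/
open Set Pointwise

noncomputable section

/-- A point `x ≠ q` of a set `Δ` is visible from `q` if the open segment `(x, q)`
is disjoint from `Δ`. -/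
def visibleFrom {n : ℕ} (q : Fin n → ℝ) (Δ : Set (Fin n → ℝ)) (x : Fin n → ℝ) : Prop :=
  x ≠ q ∧ openSegment ℝ x q ∩ Δ = ∅

/-- The simplex on vertices `p`. -/
def simplexOf {n d : ℕ} (p : Fin (d + 1) → (Fin n → ℝ)) : Set (Fin n → ℝ) :=
  convexHull ℝ (Set.range p)

/-- The facet of the simplex on vertices `p` opposite the vertex `i`. -/
def facetOf {n d : ℕ} (p : Fin (d + 1) → (Fin n → ℝ)) (i : Fin (d + 1)) : Set (Fin n → ℝ) :=
  convexHull ℝ (p '' {i}ᶜ)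

/-- The half-open simplex: the simplex on vertices `p` with all facets visible from `q`
removed. -/
def halfOpen {n d : ℕ} (q : Fin n → ℝ) (p : Fin (d + 1) → (Fin n → ℝ)) : Set (Fin n → ℝ) :=
  simplexOf p \ ⋃ i ∈ {i : Fin (d + 1) | ∀ x ∈ facetOf p i, visibleFrom q (simplexOf p) x},
    facetOf p i

/-!
Everything is read off the points `x + ε (q - x)` for small `ε > 0`. If `x ∈ H_q(Δ)`, every
barycentric coordinate of `Δ` vanishing at `x` is positive at `q` (it is nonzero by general
position, and negative would make the corresponding facet visible), so these points lie in the
relative interior of `Δ`; hence two half-open simplices containing `x` would have overlapping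
relative interiors. Conversely, the finitely many simplices cover these points, so one simplex `Δ`
contains them for arbitrarily small `ε`; being closed it contains `x`, and `x` lies on no facet of
`Δ` visible from `q`. The barycentric argument needs `q` in the affine span of every simplex: all
simplices span `aff P`, since a convex set covered by finitely many affine subspaces has its
direction inside the direction of one of them.
-/

open Filter Topology

theorem mem_intrinsicInterior_of_isOpen {𝕜 E : Type*} [Ring 𝕜] [AddCommGroup E] [Module 𝕜 E]
    [TopologicalSpace E] {s U : Set E} {x : E} (hU : IsOpen U) (hxU : x ∈ U)
    (hx : x ∈ affineSpan 𝕜 s) (hUs : U ∩ affineSpan 𝕜 s ⊆ s) : x ∈ intrinsicInterior 𝕜 s :=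
  ⟨⟨x, hx⟩, mem_interior.2 ⟨Subtype.val ⁻¹' U, fun y hy => hUs ⟨hy, y.2⟩,
    hU.preimage continuous_subtype_val, hxU⟩, rfl⟩

theorem eventually_lineMap_pos {a b : ℝ} (h : 0 < a ∨ a = 0 ∧ 0 < b) :
    ∀ᶠ ε in 𝓝[>] (0 : ℝ), 0 < AffineMap.lineMap a b ε := by
  rcases h with ha | ⟨rfl, hb⟩
  · refine nhdsWithin_le_nhds ((AffineMap.lineMap_continuous.tendsto' 0 a ?_).eventually
      (lt_mem_nhds ha))
    simp
  · filter_upwards [self_mem_nhdsWithin] with ε hε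
    simpa [AffineMap.lineMap_apply_module'] using mul_pos hε hb

theorem AffineSubspace.mem_direction_of_smul_add_mem {k E : Type*} [Field k] [AddCommGroup E]
    [Module k E] (A : AffineSubspace k E) {v y : E} {t₁ t₂ : k} (ht : t₁ ≠ t₂)
    (h₁ : t₁ • v + y ∈ A) (h₂ : t₂ • v + y ∈ A) : v ∈ A.direction := by
  have := A.vsub_mem_direction h₁ h₂
  rwa [vsub_eq_sub, add_sub_add_right_eq_sub, ← sub_smul,
    Submodule.smul_mem_iff _ (sub_ne_zero.2 ht)] at this

section Covering

variable {E : Type*} [NormedAddCommGroup E] [NormedSpace ℝ E]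

theorem eventually_smul_add_mem_of_mem_intrinsicInterior {C : Set E} {y v : E}
    (hy : y ∈ intrinsicInterior ℝ C) (hv : v ∈ (affineSpan ℝ C).direction) :
    ∀ᶠ t in 𝓝 (0 : ℝ), t • v + y ∈ C := by
  obtain ⟨y, hy, rfl⟩ := hy
  let f : ℝ → affineSpan ℝ C := fun t =>
    ⟨t • v + y, AffineSubspace.vadd_mem_of_mem_direction (Submodule.smul_mem _ t hv) y.2⟩
  have hf : Tendsto f (𝓝 0) (𝓝 y) := by
    have : Continuous f := by fun_prop
    simpa [f] using this.tendsto 0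
  exact hf.eventually (mem_interior_iff_mem_nhds.1 hy)

theorem Convex.exists_direction_le_of_subset_iUnion [FiniteDimensional ℝ E] {ι : Type*}
    [Finite ι] {C : Set E} (hC : Convex ℝ C) (hne : C.Nonempty) {A : ι → AffineSubspace ℝ E}
    (hCA : C ⊆ ⋃ j, (A j : Set E)) : ∃ j, (affineSpan ℝ C).direction ≤ (A j).direction := by
  obtain ⟨y, hy⟩ := hne.intrinsicInterior hC
  have hcover : ∀ v ∈ (affineSpan ℝ C).direction, ∃ j, v ∈ (A j).direction := by
    intro v hv
    have hT : {t : ℝ | t • v + y ∈ C}.Infinite :=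
      infinite_of_mem_nhds 0 (eventually_smul_add_mem_of_mem_intrinsicInterior hy hv)
    obtain ⟨j, hj⟩ : ∃ j, {t : ℝ | t • v + y ∈ A j}.Infinite := by
      by_contra! hfin
      refine hT ((finite_iUnion hfin).subset fun t ht => ?_)
      simpa using hCA ht
    obtain ⟨t₁, h₁, t₂, h₂, ht⟩ := hj.nontrivial
    exact ⟨j, (A j).mem_direction_of_smul_add_mem ht h₁ h₂⟩
  obtain ⟨j, hj⟩ := Subspace.exists_eq_top_of_iUnion_eq_univ
    (p := fun j => ((A j).direction.comap (affineSpan ℝ C).direction.subtype))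
    (eq_univ_of_forall fun v => by simpa using hcover v v.2)
  exact ⟨j, fun v hv => by simpa using hj.ge (Submodule.mem_top (x := ⟨v, hv⟩))⟩

end Covering

section Barycentric

variable {ι E : Type*} [AddCommGroup E] [Module ℝ E]

open Classical in
def IsBarycentricCoords (p : ι → E) (c : ι → E →ᵃ[ℝ] ℝ) : Prop :=
  ∀ i k, c i (p k) = if i = k then 1 else 0

theorem AffineIndependent.exists_isBarycentricCoords {p : ι → E}
    (hp : AffineIndependent ℝ p) : ∃ c, IsBarycentricCoords p c := by
  classical
  obtain ⟨t, hpt, hti, htop⟩ := exists_subset_affineIndependent_affineSpan_eq_top hp.range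
  let b : AffineBasis t ℝ E := ⟨(↑), hti, by rwa [Subtype.range_coe]⟩
  let e : ι → t := fun i => ⟨p i, hpt (mem_range_self i)⟩
  refine ⟨fun i => b.coord (e i), fun i k => ?_⟩
  change b.coord (e i) (b (e k)) = _
  simp [b.coord_apply, e, hp.injective.eq_iff]

namespace IsBarycentricCoords

variable [Fintype ι] {p : ι → E} {c : ι → E →ᵃ[ℝ] ℝ}

theorem apply_affineCombination (hc : IsBarycentricCoords p c) {w : ι → ℝ}
    (hw : ∑ k, w k = 1) (i : ι) : c i (Finset.univ.affineCombination ℝ p w) = w i := by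
  classical
  rw [Finset.map_affineCombination _ _ _ hw,
    Finset.affineCombination_eq_linear_combination _ _ _ hw]
  simp [hc i]

theorem mem_convexHull_iff (hc : IsBarycentricCoords p c) {z : E} :
    z ∈ convexHull ℝ (range p) ↔ z ∈ affineSpan ℝ (range p) ∧ ∀ i, 0 ≤ c i z := by
  refine ⟨fun hz => ⟨convexHull_subset_affineSpan _ hz, fun i => ?_⟩, ?_⟩
  · refine convexHull_min ?_ ((convex_Ici 0).affine_preimage (c i)) hz
    rintro - ⟨k, rfl⟩
    simp only [mem_preimage, hc i k, mem_Ici]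
    split_ifs <;> norm_num
  · rintro ⟨hz, hz₀⟩
    obtain ⟨w, hw, rfl⟩ := eq_affineCombination_of_mem_affineSpan_of_fintype hz
    simp only [hc.apply_affineCombination hw] at hz₀
    exact affineCombination_mem_convexHull (fun i _ => hz₀ i) hw

theorem mem_convexHull_image_compl_iff (hc : IsBarycentricCoords p c) {z : E} {i : ι} :
    z ∈ convexHull ℝ (p '' {i}ᶜ) ↔ z ∈ convexHull ℝ (range p) ∧ c i z = 0 := by
  classical
  refine ⟨fun hz => ⟨convexHull_mono (image_subset_range _ _) hz, ?_⟩, ?_⟩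
  · refine convexHull_min ?_ ((convex_singleton 0).affine_preimage (c i)) hz
    rintro - ⟨k, hk, rfl⟩
    simpa [hc i k] using Ne.symm hk
  · rintro ⟨hz, hzi⟩
    obtain ⟨hzA, hz₀⟩ := hc.mem_convexHull_iff.1 hz
    obtain ⟨w, hw, rfl⟩ := eq_affineCombination_of_mem_affineSpan_of_fintype hzA
    simp only [hc.apply_affineCombination hw] at hz₀ hzi
    have hw' : ∑ k ∈ Finset.univ.erase i, w k = 1 := by rwa [Finset.sum_erase _ hzi]
    rw [affineCombination_eq_centerMass hw,
      ← Finset.centerMass_subset p (Finset.erase_subset i _) (by simp [hzi])]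
    exact (Finset.univ.erase i).centerMass_mem_convexHull (fun k _ => hz₀ k) (by simp [hw'])
      fun k hk => mem_image_of_mem p (by simpa using hk)

theorem mem_affineSpan_image_compl (hc : IsBarycentricCoords p c) {z : E} {i : ι}
    (hz : z ∈ affineSpan ℝ (range p)) (hzi : c i z = 0) : z ∈ affineSpan ℝ (p '' {i}ᶜ) := by
  obtain ⟨w, hw, rfl⟩ := eq_affineCombination_of_mem_affineSpan_of_fintype hz
  rw [hc.apply_affineCombination hw] at hzi
  exact affineCombination_mem_affineSpan_image hw (by simp [hzi]) p

end IsBarycentricCoords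

end Barycentric

theorem IsBarycentricCoords.mem_intrinsicInterior {ι E : Type*} [Fintype ι]
    [NormedAddCommGroup E] [NormedSpace ℝ E] [FiniteDimensional ℝ E] {p : ι → E}
    {c : ι → E →ᵃ[ℝ] ℝ} (hc : IsBarycentricCoords p c) {z : E}
    (hz : z ∈ affineSpan ℝ (range p)) (hz₀ : ∀ i, 0 < c i z) :
    z ∈ intrinsicInterior ℝ (convexHull ℝ (range p)) := by
  have hA : affineSpan ℝ (convexHull ℝ (range p)) = affineSpan ℝ (range p) :=
    affineSpan_convexHull _
  refine mem_intrinsicInterior_of_isOpen (U := ⋂ i, c i ⁻¹' Ioi 0) ?_ (by simpa using hz₀)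
    (hA ▸ hz) ?_
  · exact isOpen_iInter_of_finite fun i =>
      isOpen_Ioi.preimage (c i).continuous_of_finiteDimensional
  · rintro y ⟨hyU, hyA⟩
    rw [hA] at hyA
    exact hc.mem_convexHull_iff.2 ⟨hyA, fun i => (mem_iInter.1 hyU i).le⟩

section HalfOpen

variable {n d : ℕ} {p : Fin (d + 1) → (Fin n → ℝ)} {q x : Fin n → ℝ}

theorem IsBarycentricCoords.visibleFrom_of_mem_facetOf {c : Fin (d + 1) → (Fin n → ℝ) →ᵃ[ℝ] ℝ}
    (hc : IsBarycentricCoords p c) {y : Fin n → ℝ} {i : Fin (d + 1)} (hq : c i q < 0)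
    (hy : y ∈ facetOf p i) : visibleFrom q (simplexOf p) y := by
  obtain ⟨-, hyi⟩ := hc.mem_convexHull_image_compl_iff.1 hy
  refine ⟨by rintro rfl; linarith, eq_empty_iff_forall_notMem.2 ?_⟩
  rintro u ⟨hu, hΔ⟩
  rw [openSegment_eq_image_lineMap] at hu
  obtain ⟨t, ht, rfl⟩ := hu
  have := (hc.mem_convexHull_iff.1 hΔ).2 i
  rw [AffineMap.apply_lineMap, hyi, AffineMap.lineMap_apply_module'] at this
  simp only [sub_zero, smul_eq_mul, add_zero] at this
  nlinarith [ht.1]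

theorem mem_halfOpen_of_frequently_lineMap_mem
    (h : ∃ᶠ ε in 𝓝[>] (0 : ℝ), AffineMap.lineMap x q ε ∈ simplexOf p) : x ∈ halfOpen q p := by
  have hx : x ∈ simplexOf p := by
    refine ((finite_range p).isClosed_convexHull (𝕜 := ℝ)).mem_of_frequently_of_tendsto h ?_
    refine tendsto_nhdsWithin_of_tendsto_nhds ?_
    simpa using (AffineMap.lineMap_continuous (p := x) (q := q)).tendsto (0 : ℝ)
  refine ⟨hx, fun hvis => ?_⟩
  obtain ⟨i, hi, hxi⟩ := mem_iUnion₂.1 hvis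
  obtain ⟨ε, hεΔ, hε⟩ := (h.and_eventually (Ioo_mem_nhdsGT one_pos)).exists
  have hseg : AffineMap.lineMap x q ε ∈ openSegment ℝ x q := by
    rw [openSegment_eq_image_lineMap]
    exact mem_image_of_mem _ hε
  exact (eq_empty_iff_forall_notMem.1 (hi x hxi).2) _ ⟨hseg, hεΔ⟩

theorem eventually_lineMap_mem_intrinsicInterior_of_mem_halfOpen
    (hp : AffineIndependent ℝ p) (hq : q ∈ affineSpan ℝ (range p))
    (hgen : ∀ i, q ∉ affineSpan ℝ (p '' {i}ᶜ))
    (hx : x ∈ halfOpen q p) :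
    ∀ᶠ ε in 𝓝[>] (0 : ℝ), AffineMap.lineMap x q ε ∈ intrinsicInterior ℝ (simplexOf p) := by
  obtain ⟨c, hc⟩ := hp.exists_isBarycentricCoords
  obtain ⟨hxΔ, hxH⟩ := hx
  obtain ⟨hxA, hx₀⟩ := hc.mem_convexHull_iff.1 hxΔ
  have hcoord : ∀ i, 0 < c i x ∨ c i x = 0 ∧ 0 < c i q := by
    intro i
    refine (hx₀ i).lt_or_eq.imp id fun hxi => ⟨hxi.symm, ?_⟩
    refine (Ne.lt_or_gt fun hqi => hgen i (hc.mem_affineSpan_image_compl hq hqi)).resolve_left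
      fun hqi => hxH ?_
    exact mem_biUnion (fun y hy => hc.visibleFrom_of_mem_facetOf hqi hy)
      (hc.mem_convexHull_image_compl_iff.2 ⟨hxΔ, hxi.symm⟩)
  filter_upwards [eventually_all.2 fun i => eventually_lineMap_pos (hcoord i)] with ε hε
  refine hc.mem_intrinsicInterior (AffineMap.lineMap_mem ε hxA hq) fun i => ?_
  simpa only [AffineMap.apply_lineMap] using hε i

end HalfOpen

theorem affineSpan_range_eq_of_iUnion_convexHull_eq {n d s : ℕ} {P : Set (Fin n → ℝ)}
    (hP : Convex ℝ P) {p : Fin s → Fin (d + 1) → (Fin n → ℝ)}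
    (hind : ∀ j, AffineIndependent ℝ (p j)) (hcover : ⋃ j, simplexOf (p j) = P) (j : Fin s) :
    affineSpan ℝ (range (p j)) = affineSpan ℝ P := by
  have hsub : ∀ j, simplexOf (p j) ⊆ P := fun j =>
    hcover ▸ subset_iUnion (fun j => simplexOf (p j)) j
  have hle : ∀ j, affineSpan ℝ (range (p j)) ≤ affineSpan ℝ P := fun j =>
    affineSpan_mono ℝ ((subset_convexHull ℝ _).trans (hsub j))
  have hrank : ∀ j, Module.finrank ℝ (affineSpan ℝ (range (p j))).direction = d := fun j => by
    rw [direction_affineSpan, (hind j).finrank_vectorSpan (Fintype.card_fin _)]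
  obtain ⟨j₀, hj₀⟩ := hP.exists_direction_le_of_subset_iUnion
    ⟨p j 0, hsub j (subset_convexHull ℝ _ (mem_range_self 0))⟩
    (A := fun j => affineSpan ℝ (range (p j)))
    (hcover ▸ iUnion_mono fun j => convexHull_subset_affineSpan _)
  refine AffineSubspace.eq_of_direction_eq_of_nonempty_of_le ?_
    ⟨p j 0, mem_affineSpan ℝ (mem_range_self 0)⟩ (hle j)
  refine Submodule.eq_of_le_of_finrank_le (AffineSubspace.direction_le (hle j)) ?_
  rw [hrank j, ← hrank j₀]
  exact Submodule.finrank_mono hj₀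

/-- for a dissection of a polytope `P` into `d`-simplices and a point `q ∈ P`
in general position, the half-open simplices `H_q(Δ₁), …, H_q(Δ_s)` partition `P`. -/
theorem stmt2 {n d s : ℕ} (P : Set (Fin n → ℝ)) (hP : Convex ℝ P)
    (p : Fin s → Fin (d + 1) → (Fin n → ℝ))
    (hind : ∀ j, AffineIndependent ℝ (p j))
    (hdisj : ∀ j j', j ≠ j' →
      intrinsicInterior ℝ (simplexOf (p j)) ∩ intrinsicInterior ℝ (simplexOf (p j')) = ∅)
    (hcover : ⋃ j, simplexOf (p j) = P)
    (q : Fin n → ℝ) (hqP : q ∈ P)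
    (hgen : ∀ j i, q ∉ (affineSpan ℝ (p j '' {i}ᶜ) : Set (Fin n → ℝ))) :
    ∀ x ∈ P, ∃! j, x ∈ halfOpen q (p j) := by
  intro x hx
  have hq : ∀ j, q ∈ affineSpan ℝ (range (p j)) := fun j => by
    rw [affineSpan_range_eq_of_iUnion_convexHull_eq hP hind hcover j]
    exact mem_affineSpan ℝ hqP
  have hseg : ∀ᶠ ε in 𝓝[>] (0 : ℝ), ∃ j, AffineMap.lineMap x q ε ∈ simplexOf (p j) := by
    filter_upwards [Ioo_mem_nhdsGT one_pos] with ε hε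
    exact mem_iUnion.1 (hcover ▸ hP.lineMap_mem hx hqP ⟨hε.1.le, hε.2.le⟩)
  obtain ⟨j, hj⟩ := frequently_exists.1 hseg.frequently
  have hxj := mem_halfOpen_of_frequently_lineMap_mem hj
  refine ⟨j, hxj, fun j' hxj' => ?_⟩
  by_contra hne
  have hrelint := fun j (hxj : x ∈ halfOpen q (p j)) =>
    eventually_lineMap_mem_intrinsicInterior_of_mem_halfOpen (hind j) (hq j) (hgen j) hxj
  obtain ⟨ε, hε', hε⟩ := ((hrelint j' hxj').and (hrelint j hxj)).exists
  exact (eq_empty_iff_forall_notMem.1 (hdisj j' j hne)) _ ⟨hε', hε⟩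
end
end

section
/- Let 𝒢 be a connected undirected graph with vertex set V, P_𝒢 = conv{1_u − 1_v, 1_v − 1_u : uv ∈ E(𝒢)} its symmetric edge polytope, and v ∈ V fixed. Choose q ∈ ℝ^V with q_v > 0, q_u < 0 for all u ≠ v, and Σ_u q_u = 0, scaled so q ∈ P_𝒢. Then for any oriented spanning tree T of 𝒢 and edge e ∈ T, the facet conv({0} ∪ {x_f : f ∈ T − e}) of the simplex conv({0} ∪ {x_f : f ∈ T}) is visible from q if and only if e points away from v in T. -/
open Set Pointwise

noncomputable section

/-- A point of `ℝ^V` is a lattice point if all its coordinates are integers. -/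
def isLattice {ι : Type*} (x : ι → ℝ) : Prop := ∀ i, ∃ z : ℤ, x i = (z : ℝ)

/-- The vector `x_e = 1_h - 1_t ∈ ℝ^V` of a directed edge `e = (t, h)`. -/
def edgeVec {V : Type*} [DecidableEq V] (e : V × V) : V → ℝ :=
  fun u => (if u = e.2 then (1 : ℝ) else 0) - (if u = e.1 then (1 : ℝ) else 0)

/-- The undirected (simple) graph underlying a set of directed edges. -/
def undirected {V : Type*} (A : Set (V × V)) : SimpleGraph V :=
  SimpleGraph.fromEdgeSet ((fun e : V × V => s(e.1, e.2)) '' A)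

/-- A set of directed edges is a spanning tree if its edges are loopless and pairwise
distinct as undirected edges, and the underlying undirected graph is connected and
acyclic (hence a spanning tree of the complete graph on `V`). -/
def IsSpanningTree {V : Type*} (T : Set (V × V)) : Prop :=
  (∀ e ∈ T, e.1 ≠ e.2) ∧ Set.InjOn (fun e : V × V => s(e.1, e.2)) T ∧
    (undirected T).Connected ∧ (undirected T).IsAcyclic

/-- The shore of the fundamental cut of `e ∈ T` containing the head of `e`: the vertex
set of the component of `T - e` containing the head of `e`. -/
def shore1 {V : Type*} (T : Set (V × V)) (e : V × V) : Set V :=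
  {u | (undirected (T \ {e})).Reachable e.2 u}

/-- The fundamental cut `C*(T, e)`: edges of `E` connecting the two shores of `T - e`. -/
def fundCut {V : Type*} (E T : Set (V × V)) (e : V × V) : Set (V × V) :=
  {f ∈ E | ¬ ((f.1 ∈ shore1 T e) ↔ (f.2 ∈ shore1 T e))}

/-- An edge `f` of the fundamental cut `C*(T, e)` stands parallel to `e` if its head is
on the same shore as the head of `e`. -/
def standsParallel {V : Type*} (T : Set (V × V)) (e f : V × V) : Prop :=
  f.2 ∈ shore1 T e

/-- The linear functional `h : ℝ^V → ℝ` with `h(1_u) = 1` for `u` on the head shore of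
the fundamental cut of `e ∈ T` and `h(1_u) = 0` on the other shore. -/
def cutFunctional {V : Type*} [Fintype V] (T : Set (V × V)) (e : V × V) (x : V → ℝ) : ℝ :=
  ∑ u, (shore1 T e).indicator x u

/-- An edge `e` of a directed tree `T` points away from `v` if `v` lies in the component
of `T - e` containing the tail of `e`. -/
def pointsAway {V : Type*} (T : Set (V × V)) (e : V × V) (v : V) : Prop :=
  (undirected (T \ {e})).Reachable e.1 v

/-- `e ∈ T` is internally semi-passive w.r.t. the edge order `ord` if the `ord`-maximal
edge of the fundamental cut `C*(T, e)` stands opposite to `e`. -/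
def semiPassive {V : Type*} (E T : Set (V × V)) (ord : V × V → ℕ) (e : V × V) : Prop :=
  ∃ f ∈ fundCut E T e, (∀ g ∈ fundCut E T e, ord g ≤ ord f) ∧ ¬ standsParallel T e f

/-- The symmetric edge polytope of an undirected graph. -/
def symEdgePolytope {V : Type*} [Fintype V] [DecidableEq V] (G : SimpleGraph V) :
    Set (V → ℝ) :=
  convexHull ℝ {x | ∃ u v, G.Adj u v ∧ x = edgeVec (u, v)}

/-- The root polytope of a digraph with edge set `E`. -/
def rootPolytope {V : Type*} [Fintype V] [DecidableEq V] (E : Set (V × V)) :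
    Set (V → ℝ) :=
  convexHull ℝ (edgeVec '' E)

/-!
Let `L` sum the coordinates over the shore of the fundamental cut of `e` that contains the head
of `e`. Then `L x_e = 1` and `L x_f = 0` for `f ∈ T - e`, so the facet lies in the hyperplane
`L = 0` and the simplex in the half-space `L ≥ 0`. As `q` is negative off `v` and sums to zero,
`L q < 0` if `v` is on the tail shore (`e` points away from `v`), and `L q > 0` otherwise.
In the first case the hyperplane separates `q` from the simplex. In the second, `L q` is the
coefficient of `x_e` when `q` is written in the basis `(x_f)_{f ∈ T}`, so a short step from a
relatively interior point of the facet towards `q` stays in the simplex.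
-/

namespace SimpleGraph

variable {V : Type*} {G : SimpleGraph V}

theorem Reachable.deleteEdges_or {a b u : V} (h : G.Reachable a u) :
    (G.deleteEdges {s(a, b)}).Reachable a u ∨ (G.deleteEdges {s(a, b)}).Reachable b u := by
  rw [reachable_iff_reflTransGen] at h
  induction h with
  | refl => exact .inl .rfl
  | @tail x y _ hxy ih =>
    by_cases hab : s(x, y) = s(a, b)
    · rcases Sym2.eq_iff.mp hab with ⟨-, rfl⟩ | ⟨-, rfl⟩
      · exact .inr .rfl
      · exact .inl .rfl
    · have hxy' : (G.deleteEdges {s(a, b)}).Adj x y := deleteEdges_adj.mpr ⟨hxy, hab⟩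
      exact ih.imp (·.trans hxy'.reachable) (·.trans hxy'.reachable)

end SimpleGraph

section SpanningTree

variable {V : Type*} {T : Set (V × V)} {e : V × V}

theorem undirected_adj {a b : V} :
    (undirected T).Adj a b ↔ (∃ f ∈ T, s(f.1, f.2) = s(a, b)) ∧ a ≠ b := by
  simp [undirected]

theorem undirected_adj_of_mem {f : V × V} (hf : f ∈ T) (hne : f.1 ≠ f.2) :
    (undirected T).Adj f.1 f.2 :=
  undirected_adj.mpr ⟨⟨f, hf, rfl⟩, hne⟩

theorem undirected_diff_singleton (hinj : Set.InjOn (fun f : V × V => s(f.1, f.2)) T)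
    (he : e ∈ T) : undirected (T \ {e}) = (undirected T).deleteEdges {s(e.1, e.2)} := by
  ext a b
  simp only [undirected_adj, SimpleGraph.deleteEdges_adj, Set.mem_sdiff, Set.mem_singleton_iff]
  constructor
  · rintro ⟨⟨f, ⟨hf, hfe⟩, hfab⟩, hab⟩
    exact ⟨⟨⟨f, hf, hfab⟩, hab⟩, fun h => hfe (hinj hf he (hfab.trans h))⟩
  · rintro ⟨⟨⟨f, hf, hfab⟩, hab⟩, hne⟩
    exact ⟨⟨f, ⟨hf, fun hfe => hne (hfe ▸ hfab.symm)⟩, hfab⟩, hab⟩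

theorem mem_shore1_iff_of_mem_diff {f : V × V} (hf : f ∈ T \ {e}) (hne : f.1 ≠ f.2) :
    f.1 ∈ shore1 T e ↔ f.2 ∈ shore1 T e :=
  have hadj := undirected_adj_of_mem hf hne
  ⟨(·.trans hadj.reachable), (·.trans hadj.symm.reachable)⟩

theorem head_mem_shore1 : e.2 ∈ shore1 T e := .refl _

theorem IsSpanningTree.tail_notMem_shore1 (hT : IsSpanningTree T) (he : e ∈ T) :
    e.1 ∉ shore1 T e := by
  obtain ⟨hloop, hinj, -, hacyc⟩ := hT
  have hbridge := SimpleGraph.isAcyclic_iff_forall_adj_isBridge.mp hacyc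
    (undirected_adj_of_mem he (hloop e he))
  rw [SimpleGraph.isBridge_iff, ← undirected_diff_singleton hinj he] at hbridge
  exact fun h => hbridge (SimpleGraph.Reachable.symm h)

theorem IsSpanningTree.pointsAway_iff (hT : IsSpanningTree T) (he : e ∈ T) (v : V) :
    pointsAway T e v ↔ v ∉ shore1 T e := by
  refine ⟨fun hv hv' => hT.tail_notMem_shore1 he (hv'.trans hv.symm), fun hv => ?_⟩
  have := (hT.2.2.1.preconnected e.1 v).deleteEdges_or (b := e.2)
  rw [← undirected_diff_singleton hT.2.1 he] at this
  exact this.resolve_right hv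

end SpanningTree

section EdgeVectors

variable {V : Type*} [DecidableEq V]

theorem edgeVec_self (a : V) : edgeVec (a, a) = 0 := by
  ext; simp [edgeVec]

theorem edgeVec_add_edgeVec (a b c : V) : edgeVec (a, b) + edgeVec (b, c) = edgeVec (a, c) := by
  ext; simp only [edgeVec, Pi.add_apply]; ring

theorem edgeVec_swap (a b : V) : edgeVec (b, a) = -edgeVec (a, b) := by
  ext; simp only [edgeVec, Pi.neg_apply]; ring

theorem edgeVec_mem_span_of_reachable {T : Set (V × V)} {a b : V}
    (h : (undirected T).Reachable a b) : edgeVec (a, b) ∈ Submodule.span ℝ (edgeVec '' T) := by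
  rw [SimpleGraph.reachable_iff_reflTransGen] at h
  induction h with
  | refl => simp [edgeVec_self]
  | @tail b c _ hbc ih =>
    rw [← edgeVec_add_edgeVec a b c]
    refine add_mem ih ?_
    obtain ⟨⟨f, hf, hfbc⟩, -⟩ := undirected_adj.mp hbc
    have hf' : edgeVec f ∈ Submodule.span ℝ (edgeVec '' T) :=
      Submodule.subset_span ⟨f, hf, rfl⟩
    rcases Sym2.eq_iff.mp hfbc with ⟨h1, h2⟩ | ⟨h1, h2⟩
    · rwa [← h1, ← h2]
    · rw [← h1, ← h2, edgeVec_swap]; exact neg_mem hf'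

variable [Fintype V]

theorem sum_smul_edgeVec_of_sum_eq_zero (v : V) {q : V → ℝ} (hq : ∑ u, q u = 0) :
    ∑ u, q u • edgeVec (v, u) = q := by
  ext i
  simp [edgeVec, mul_sub, Finset.sum_sub_distrib, hq]

theorem mem_span_edgeVec_of_sum_eq_zero {T : Set (V × V)} (hT : (undirected T).Connected)
    {q : V → ℝ} (hq : ∑ u, q u = 0) : q ∈ Submodule.span ℝ (edgeVec '' T) := by
  obtain ⟨v⟩ := hT.nonempty
  rw [← sum_smul_edgeVec_of_sum_eq_zero v hq]
  exact Submodule.sum_mem _ fun u _ =>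
    Submodule.smul_mem _ _ (edgeVec_mem_span_of_reachable (hT.preconnected v u))

end EdgeVectors

section SumOn

variable {V : Type*} [Fintype V]

def sumOn (S : Set V) : (V → ℝ) →ₗ[ℝ] ℝ where
  toFun x := ∑ u, S.indicator x u
  map_add' x y := by simp [Set.indicator_add', Finset.sum_add_distrib]
  map_smul' c x := by
    rw [RingHom.id_apply, Finset.smul_sum]
    exact Finset.sum_congr rfl fun u _ => Set.indicator_const_smul_apply S c x u

theorem sumOn_apply (S : Set V) (x : V → ℝ) : sumOn S x = ∑ u, S.indicator x u := rfl

theorem sumOn_add_sumOn_compl (S : Set V) (x : V → ℝ) :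
    sumOn S x + sumOn Sᶜ x = ∑ u, x u := by
  simp only [sumOn_apply, ← Finset.sum_add_distrib, Set.indicator_self_add_compl_apply]

theorem sumOn_neg {S : Set V} {q : V → ℝ} {v a : V} (hq : ∀ u, u ≠ v → q u < 0)
    (hv : v ∉ S) (ha : a ∈ S) : sumOn S q < 0 := by
  rw [sumOn_apply]
  refine Finset.sum_neg' (fun u _ => ?_) ⟨a, Finset.mem_univ a, ?_⟩
  · by_cases hu : u ∈ S
    · rw [Set.indicator_of_mem hu]; exact (hq u (ne_of_mem_of_not_mem hu hv)).le
    · rw [Set.indicator_of_notMem hu]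
  · rw [Set.indicator_of_mem ha]; exact hq a (ne_of_mem_of_not_mem ha hv)

theorem sumOn_pos {S : Set V} {q : V → ℝ} {v a : V} (hq : ∀ u, u ≠ v → q u < 0)
    (hsum : ∑ u, q u = 0) (hv : v ∈ S) (ha : a ∉ S) : 0 < sumOn S q := by
  have := sumOn_neg (S := Sᶜ) hq (not_not_intro hv) ha
  linarith [sumOn_add_sumOn_compl S q]

variable [DecidableEq V]

theorem sumOn_edgeVec (S : Set V) (f : V × V) :
    sumOn S (edgeVec f) = S.indicator 1 f.2 - S.indicator 1 f.1 := by
  have key : ∀ u, S.indicator (edgeVec f) u =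
      (if u = f.2 then S.indicator 1 f.2 else 0) - (if u = f.1 then S.indicator 1 f.1 else 0) := by
    intro u
    by_cases hu : u ∈ S <;> by_cases h2 : u = f.2 <;> by_cases h1 : u = f.1 <;> simp_all [edgeVec]
  simp [sumOn_apply, key, Finset.sum_sub_distrib]

theorem sumOn_shore1_edgeVec {T : Set (V × V)} {e f : V × V} (hT : IsSpanningTree T)
    (he : e ∈ T) (hf : f ∈ T) : sumOn (shore1 T e) (edgeVec f) = if f = e then 1 else 0 := by
  rw [sumOn_edgeVec]
  split_ifs with hfe
  · subst hfe
    rw [Set.indicator_of_mem head_mem_shore1,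
      Set.indicator_of_notMem (hT.tail_notMem_shore1 hf)]
    simp
  · have := mem_shore1_iff_of_mem_diff (e := e) ⟨hf, hfe⟩ (hT.1 f hf)
    by_cases h : f.2 ∈ shore1 T e
    · simp [Set.indicator_of_mem h, Set.indicator_of_mem (this.mpr h)]
    · simp [Set.indicator_of_notMem h, Set.indicator_of_notMem (mt this.mp h)]

end SumOn

section Visibility

open Filter Topology

variable {ι E : Type*} [AddCommGroup E] [Module ℝ E]

def IsVisibleFrom (F Δ : Set E) (q : E) : Prop :=
  ∀ x ∈ F, x ≠ q ∧ openSegment ℝ x q ∩ Δ = ∅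

theorem isVisibleFrom_convexHull_insert_zero (L : E →ₗ[ℝ] ℝ) {s t : Set E} {q : E}
    (hs : ∀ y ∈ s, L y = 0) (ht : ∀ y ∈ t, 0 ≤ L y) (hq : L q < 0) :
    IsVisibleFrom (convexHull ℝ (insert 0 s)) (convexHull ℝ (insert 0 t)) q := by
  have hF : convexHull ℝ (insert 0 s) ⊆ {y | L y = 0} :=
    convexHull_min (Set.insert_subset (by simp) hs) (convex_hyperplane L.isLinear 0)
  have hΔ : convexHull ℝ (insert 0 t) ⊆ {y | 0 ≤ L y} :=
    convexHull_min (Set.insert_subset (by simp) ht) (convex_halfSpace_ge L.isLinear 0)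
  intro x hx
  have hLx : L x = 0 := hF hx
  refine ⟨fun hxq => hq.ne (hxq ▸ hLx), Set.eq_empty_of_forall_notMem ?_⟩
  rintro _ ⟨⟨a, b, -, hb, -, rfl⟩, hp⟩
  have : 0 ≤ b * L q := by simpa [hLx] using hΔ hp
  exact (mul_neg_of_pos_of_neg hb hq).not_ge this

theorem sum_smul_mem_convexHull_insert_zero (b : ι → E) {A : Finset ι} {c : ι → ℝ}
    (hc₀ : ∀ f ∈ A, 0 ≤ c f) (hc₁ : ∑ f ∈ A, c f ≤ 1) :
    ∑ f ∈ A, c f • b f ∈ convexHull ℝ (insert 0 (b '' A)) := by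
  have h := (convex_convexHull ℝ (insert 0 (b '' A))).sum_mem (t := A.insertNone)
    (w := fun o => o.elim (1 - ∑ f ∈ A, c f) c) (z := fun o => o.elim 0 b) ?_ ?_ ?_
  · simpa [Finset.sum_insertNone] using h
  · rintro (_ | f) hf
    · simpa using hc₁
    · exact hc₀ f (by simpa using hf)
  · simp [Finset.sum_insertNone]
  · rintro (_ | f) hf
    · exact subset_convexHull ℝ _ (Set.mem_insert _ _)
    · exact subset_convexHull ℝ _ (Set.mem_insert_of_mem _ ⟨f, by simpa using hf, rfl⟩)

theorem eventually_combination_nonneg_and_sum_le_one {A : Finset ι} {e : ι} {u d : ι → ℝ}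
    (hu : ∀ f ∈ A, f ≠ e → 0 < u f) (hue : u e = 0) (hu₁ : ∑ f ∈ A, u f < 1)
    (hde : 0 < d e) :
    ∀ᶠ s in 𝓝[>] (0 : ℝ), (∀ f ∈ A, 0 ≤ (1 - s) * u f + s * d f) ∧
      ∑ f ∈ A, ((1 - s) * u f + s * d f) ≤ 1 := by
  have hlim : ∀ g : ℝ → ℝ, Continuous g → Tendsto g (𝓝[>] 0) (𝓝 (g 0)) :=
    fun g hg => hg.continuousWithinAt
  refine ((eventually_all_finset A).2 fun f hf => ?_).and ?_
  · by_cases hfe : f = e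
    · filter_upwards [self_mem_nhdsWithin] with s (hs : 0 < s)
      simpa [hfe, hue] using mul_nonneg hs.le hde.le
    · have h := hlim (fun s => (1 - s) * u f + s * d f) (by fun_prop)
      simp only [sub_zero, one_mul, zero_mul, add_zero] at h
      exact (h.eventually_const_lt (hu f hf hfe)).mono fun _ => le_of_lt
  · have h := hlim (fun s => ∑ f ∈ A, ((1 - s) * u f + s * d f)) (by fun_prop)
    simp only [sub_zero, one_mul, zero_mul, add_zero] at h
    exact (h.eventually_lt_const hu₁).mono fun _ => le_of_lt

theorem not_isVisibleFrom_convexHull_insert_zero [DecidableEq ι] (b : ι → E) {A : Finset ι}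
    {e : ι} (he : e ∈ A) {d : ι → ℝ} (hde : 0 < d e) :
    ¬ IsVisibleFrom (convexHull ℝ (insert 0 (b '' ↑(A.erase e))))
      (convexHull ℝ (insert 0 (b '' A))) (∑ f ∈ A, d f • b f) := by
  have hA : 0 < A.card := Finset.card_pos.mpr ⟨e, he⟩
  set u : ι → ℝ := fun f => if f = e then 0 else 1 / A.card
  have hu : ∀ f, f ≠ e → 0 < u f := fun f hfe => by simpa [u, hfe] using hA
  have hue : u e = 0 := if_pos rfl
  have hu₁ : ∑ f ∈ A, u f < 1 := calc
    ∑ f ∈ A, u f < ∑ _f ∈ A, (1 / A.card : ℝ) :=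
      Finset.sum_lt_sum (fun f _ => by by_cases hf : f = e <;> simp [u, hf])
        ⟨e, he, by simpa [hue] using hA⟩
    _ = 1 := by simp [hA.ne']
  have hIoo : ∀ᶠ s in 𝓝[>] (0 : ℝ), s ∈ Set.Ioo 0 1 := Ioo_mem_nhdsGT one_pos
  obtain ⟨s, ⟨hs₀, hs₁⟩, hc₀, hc₁⟩ := (hIoo.and <|
    eventually_combination_nonneg_and_sum_le_one (fun f _ => hu f) hue hu₁ hde).exists
  intro hvis
  have hx : ∑ f ∈ A, u f • b f ∈ convexHull ℝ (insert 0 (b '' ↑(A.erase e))) := by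
    rw [← Finset.sum_erase A (by simp [hue] : u e • b e = 0)]
    refine sum_smul_mem_convexHull_insert_zero b
      (fun f hf => (hu f (Finset.ne_of_mem_erase hf)).le) ?_
    rw [Finset.sum_erase A hue]
    exact hu₁.le
  refine (hvis _ hx).2.subset ⟨⟨1 - s, s, by linarith, hs₀, by ring, ?_⟩,
    sum_smul_mem_convexHull_insert_zero b hc₀ hc₁⟩
  simp only [add_smul, mul_smul, Finset.sum_add_distrib, Finset.smul_sum]

end Visibility

theorem stmt9_general {V : Type*} [Fintype V] [DecidableEq V] (v : V) (q : V → ℝ)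
    (hqu : ∀ u, u ≠ v → q u < 0) (hqsum : ∑ u, q u = 0)
    (T : Set (V × V)) (hT : IsSpanningTree T)
    (e : V × V) (he : e ∈ T) :
    (∀ x ∈ convexHull ℝ (insert (0 : V → ℝ) (edgeVec '' (T \ {e}))),
        x ≠ q ∧ openSegment ℝ x q ∩ convexHull ℝ (insert (0 : V → ℝ) (edgeVec '' T)) = ∅)
      ↔ pointsAway T e v := by
  change IsVisibleFrom _ _ q ↔ _
  rw [hT.pointsAway_iff he]
  set L := sumOn (shore1 T e)
  constructor
  · intro hvis hv
    obtain ⟨A, rfl⟩ := T.toFinite.exists_finset_coe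
    obtain ⟨d, hd⟩ := (Submodule.mem_span_image_finset_iff_exists_fun' ℝ).mp
      (mem_span_edgeVec_of_sum_eq_zero hT.2.2.1 hqsum)
    have hLq : L q = d e := by
      rw [← hd, map_sum, Finset.sum_eq_single_of_mem e he fun f hf hfe => ?_]
      · simp [L, sumOn_shore1_edgeVec hT he he]
      · simp [L, sumOn_shore1_edgeVec hT he hf, hfe]
    rw [← Finset.coe_erase, ← hd] at hvis
    exact not_isVisibleFrom_convexHull_insert_zero edgeVec he
      (hLq ▸ sumOn_pos hqu hqsum hv (hT.tail_notMem_shore1 he)) hvis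
  · intro hv
    refine isVisibleFrom_convexHull_insert_zero L ?_ ?_ (sumOn_neg hqu hv head_mem_shore1)
    · rintro _ ⟨f, ⟨hf, hfe⟩, rfl⟩
      simpa [L, sumOn_shore1_edgeVec hT he hf] using hfe
    · rintro _ ⟨f, hf, rfl⟩
      rw [sumOn_shore1_edgeVec hT he hf]
      split_ifs <;> norm_num

/-- for the chosen interior point `q` of the symmetric edge polytope
(positive coordinate at `v`, negative elsewhere, coordinate sum zero), a facet
`conv({0} ∪ {x_f : f ∈ T - e})` of a spanning-tree simplex `conv({0} ∪ {x_f : f ∈ T})`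
is visible from `q` iff `e` points away from `v` in `T`. -/
theorem stmt9 {V : Type*} [Fintype V] [DecidableEq V] (G : SimpleGraph V)
    (hG : G.Connected) (v : V) (q : V → ℝ)
    (hqv : 0 < q v) (hqu : ∀ u, u ≠ v → q u < 0) (hqsum : ∑ u, q u = 0)
    (hqP : q ∈ symEdgePolytope G)
    (T : Set (V × V)) (hTG : ∀ e ∈ T, G.Adj e.1 e.2) (hT : IsSpanningTree T)
    (e : V × V) (he : e ∈ T) :
    (∀ x ∈ convexHull ℝ (insert (0 : V → ℝ) (edgeVec '' (T \ {e}))),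
        x ≠ q ∧ openSegment ℝ x q ∩ convexHull ℝ (insert (0 : V → ℝ) (edgeVec '' T)) = ∅)
      ↔ pointsAway T e v :=
  stmt9_general v q hqu hqsum T hT e he
end
end

section
/- Let Δ₁, Δ₂ be simplices of the form Q_{T_i} = conv{1_h − 1_t : (t,h) ∈ T_i} for spanning trees T₁, T₂ of a digraph G, and suppose there exists a cut C* of G with shores V₀, V₁ such that every edge of T₁ ∩ C* points from V₀ to V₁ and every edge of T₂ ∩ C* points from V₁ to V₀, with T₁ ∩ C* and T₂ ∩ C* nonempty. Then Q_{T₁} and Q_{T₂} have disjoint relative interiors. -/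
open Set Pointwise

noncomputable section

/-- If a linear functional is nonnegative on a set and positive on some point of the
set, then it is positive on the intrinsic interior. -/
lemma pos_on_intrinsicInterior {E : Type*} [NormedAddCommGroup E] [NormedSpace ℝ E]
    (s : Set E) (f : E →ₗ[ℝ] ℝ) (hf : ∀ y ∈ s, 0 ≤ f y)
    (g : E) (hg : g ∈ s) (hgpos : 0 < f g) {x : E}
    (hx : x ∈ intrinsicInterior ℝ s) : 0 < f x := by
  obtain ⟨y, hy, hyx⟩ := (mem_intrinsicInterior (𝕜 := ℝ)).1 hx
  have hxs : x ∈ s := intrinsicInterior_subset hx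
  by_contra hle
  have hfx : f x = 0 := le_antisymm (not_lt.1 hle) (hf x hxs)
  have hxspan : x ∈ affineSpan ℝ s := subset_affineSpan ℝ s hxs
  have hgspan : g ∈ affineSpan ℝ s := subset_affineSpan ℝ s hg
  -- the curve t ↦ x + t • (x - g) inside the affine span
  have hmem : ∀ t : ℝ, x + t • (x - g) ∈ affineSpan ℝ s := by
    intro t
    have := AffineSubspace.smul_vsub_vadd_mem (affineSpan ℝ s) t hxspan hgspan hxspan
    simpa [vsub_eq_sub, vadd_eq_add, add_comm] using this
  set c : ℝ → affineSpan ℝ s := fun t => ⟨x + t • (x - g), hmem t⟩ with hc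
  have hcont : Continuous c := by
    apply Continuous.subtype_mk
    continuity
  have hc0 : c 0 = y := by
    apply Subtype.ext
    simp [hc, hyx]
  have hnhds : c ⁻¹' (interior ((↑) ⁻¹' s : Set <| affineSpan ℝ s)) ∈ nhds (0 : ℝ) := by
    apply (hcont.isOpen_preimage _ isOpen_interior).mem_nhds
    simpa [hc0] using hy
  obtain ⟨ε, hε, hball⟩ := Metric.mem_nhds_iff.1 hnhds
  have ht : (ε / 2 : ℝ) ∈ Metric.ball (0 : ℝ) ε := by
    rw [Metric.mem_ball, Real.dist_eq, sub_zero, abs_of_pos (half_pos hε)]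
    linarith
  have hcs : x + (ε / 2) • (x - g) ∈ s := by
    have h := interior_subset (hball ht)
    simpa [hc] using h
  have h2 := hf _ hcs
  have hval : f (x + (ε / 2) • (x - g)) = -(ε / 2) * f g := by
    simp only [map_add, map_smul, map_sub, smul_eq_mul, hfx]
    ring
  rw [hval] at h2
  nlinarith

/-- if a cut with shores `V₁ᶜ, V₁` separates two spanning trees (all edges
of `T₁` in the cut point into `V₁`, all edges of `T₂` in the cut point out of `V₁`, and
both trees meet the cut), then their simplices have disjoint relative interiors. -/
theorem stmt19 {V : Type*} [Fintype V] [DecidableEq V] (E T₁ T₂ : Finset (V × V))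
    (h1E : T₁ ⊆ E) (h2E : T₂ ⊆ E)
    (hT1 : IsSpanningTree (↑T₁ : Set (V × V))) (hT2 : IsSpanningTree (↑T₂ : Set (V × V)))
    (V₁ : Set V)
    (hcut1 : ∀ e ∈ T₁, ¬ ((e.1 ∈ V₁) ↔ (e.2 ∈ V₁)) → e.1 ∉ V₁ ∧ e.2 ∈ V₁)
    (hcut2 : ∀ e ∈ T₂, ¬ ((e.1 ∈ V₁) ↔ (e.2 ∈ V₁)) → e.1 ∈ V₁ ∧ e.2 ∉ V₁)
    (hne1 : ∃ e ∈ T₁, ¬ ((e.1 ∈ V₁) ↔ (e.2 ∈ V₁)))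
    (hne2 : ∃ e ∈ T₂, ¬ ((e.1 ∈ V₁) ↔ (e.2 ∈ V₁))) :
    intrinsicInterior ℝ (convexHull ℝ (edgeVec '' (↑T₁ : Set (V × V)))) ∩
      intrinsicInterior ℝ (convexHull ℝ (edgeVec '' (↑T₂ : Set (V × V)))) = ∅ := by
  classical
  -- the separating linear functional: sum of coordinates over V₁
  set f : (V → ℝ) →ₗ[ℝ] ℝ :=
    { toFun := fun x => ∑ u ∈ Finset.univ.filter (· ∈ V₁), x u
      map_add' := by intro a b; simp [Finset.sum_add_distrib]
      map_smul' := by intro c a; simp [Finset.mul_sum] } with hf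
  have hfval : ∀ e : V × V, f (edgeVec e) =
      (if e.2 ∈ V₁ then (1 : ℝ) else 0) - (if e.1 ∈ V₁ then (1 : ℝ) else 0) := by
    intro e
    simp only [hf, LinearMap.coe_mk, AddHom.coe_mk, edgeVec, Finset.sum_sub_distrib]
    rw [Finset.sum_ite_eq' _ e.2, Finset.sum_ite_eq' _ e.1]
    simp
  -- f ≥ 0 on generators of T₁, ≤ 0 on generators of T₂
  have hgen1 : ∀ y ∈ edgeVec '' (↑T₁ : Set (V × V)), 0 ≤ f y := by
    rintro _ ⟨e, he, rfl⟩
    rw [hfval]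
    by_cases hc : (e.1 ∈ V₁) ↔ (e.2 ∈ V₁)
    · by_cases h1 : e.1 ∈ V₁
      · simp [h1, hc.mp h1]
      · have h2 : e.2 ∉ V₁ := fun h => h1 (hc.mpr h)
        simp [h1, h2]
    · obtain ⟨h1, h2⟩ := hcut1 e he hc; simp [h1, h2]
  have hgen2 : ∀ y ∈ edgeVec '' (↑T₂ : Set (V × V)), 0 ≤ (-f) y := by
    rintro _ ⟨e, he, rfl⟩
    simp only [LinearMap.neg_apply, hfval]
    by_cases hc : (e.1 ∈ V₁) ↔ (e.2 ∈ V₁)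
    · by_cases h1 : e.1 ∈ V₁
      · simp [h1, hc.mp h1]
      · have h2 : e.2 ∉ V₁ := fun h => h1 (hc.mpr h)
        simp [h1, h2]
    · obtain ⟨h1, h2⟩ := hcut2 e he hc; simp [h1, h2]
  -- extend to the convex hulls
  have hhull1 : ∀ y ∈ convexHull ℝ (edgeVec '' (↑T₁ : Set (V × V))), 0 ≤ f y := by
    intro y hy
    exact convexHull_min hgen1 (convex_halfSpace_ge (LinearMap.isLinear f) 0) hy
  have hhull2 : ∀ y ∈ convexHull ℝ (edgeVec '' (↑T₂ : Set (V × V))), 0 ≤ (-f) y := by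
    intro y hy
    exact convexHull_min hgen2 (convex_halfSpace_ge (LinearMap.isLinear (-f)) 0) hy
  -- positive generators
  obtain ⟨e₁, he₁T, he₁c⟩ := hne1
  obtain ⟨e₂, he₂T, he₂c⟩ := hne2
  have hg1 : edgeVec e₁ ∈ edgeVec '' (↑T₁ : Set (V × V)) := ⟨e₁, he₁T, rfl⟩
  have hg2 : edgeVec e₂ ∈ edgeVec '' (↑T₂ : Set (V × V)) := ⟨e₂, he₂T, rfl⟩
  have hp1 : 0 < f (edgeVec e₁) := by
    obtain ⟨h1, h2⟩ := hcut1 e₁ he₁T he₁c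
    rw [hfval]; simp [h1, h2]
  have hp2 : 0 < (-f) (edgeVec e₂) := by
    obtain ⟨h1, h2⟩ := hcut2 e₂ he₂T he₂c
    simp only [LinearMap.neg_apply, hfval]; simp [h1, h2]
  ext x
  simp only [Set.mem_inter_iff, Set.mem_empty_iff_false, iff_false, not_and]
  intro hx1 hx2
  have P1 := pos_on_intrinsicInterior _ f hhull1 _ (subset_convexHull ℝ _ hg1) hp1 hx1
  have P2 := pos_on_intrinsicInterior _ (-f) hhull2 _ (subset_convexHull ℝ _ hg2) hp2 hx2
  simp only [LinearMap.neg_apply] at P2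
  linarith
end
end
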